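/- There is a unique Lie algebra morphism 𝔱_{1,n} → 𝔊 over k determined by x_i ↦ X_i (1 ≤ i ≤ n), y_i ↦ Y_i (1 ≤ i ≤ n), t_{ij} ↦ −T_{ij}^0 for i < j, and t_{ij} ↦ −T_{ji}^0 for i > j. -/

import Mathlib

/-! The elliptic braid Lie algebra `𝔱_{1,n}` presented by generators and relations. -/

noncomputable section

/-- Generators of `𝔱_{1,n}`: `x i`, `y i` for `i ∈ [n]` and `t i j` for `i ≠ j`. -/
inductive TGen (n : ℕ) : Type
  | x : Fin n → TGen n
  | y : Fin n → TGen n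
  | t : (i j : Fin n) → i ≠ j → TGen n

variable (k : Type) [Field k] [CharZero k] (n : ℕ)

/-- The free Lie algebra on the generators of `𝔱_{1,n}`. -/
abbrev FT : Type := FreeLieAlgebra k (TGen n)

/-- The generator `x i` in the free Lie algebra. -/
def fx (i : Fin n) : FT k n := FreeLieAlgebra.of k (TGen.x i)

/-- The generator `y i` in the free Lie algebra. -/
def fy (i : Fin n) : FT k n := FreeLieAlgebra.of k (TGen.y i)

/-- The generator `t i j` (for `i ≠ j`) in the free Lie algebra. -/
def ft (i j : Fin n) (h : i ≠ j) : FT k n := FreeLieAlgebra.of k (TGen.t i j h)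

/-- The defining relations of `𝔱_{1,n}`. -/
inductive TRel : FT k n → Prop
  | xx (i j : Fin n) : TRel ⁅fx k n i, fx k n j⁆
  | yy (i j : Fin n) : TRel ⁅fy k n i, fy k n j⁆
  | xy (i j : Fin n) (h : i ≠ j) : TRel (⁅fx k n i, fy k n j⁆ - ft k n i j h)
  | xyDiag (i : Fin n) :
      TRel (⁅fx k n i, fy k n i⁆ + ∑ j : Fin n, if h : i ≠ j then ft k n i j h else 0)
  | xt (i j l : Fin n) (h : i ≠ j) (h1 : l ≠ i) (h2 : l ≠ j) :
      TRel ⁅fx k n l, ft k n i j h⁆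
  | yt (i j l : Fin n) (h : i ≠ j) (h1 : l ≠ i) (h2 : l ≠ j) :
      TRel ⁅fy k n l, ft k n i j h⁆
  | xxt (i j : Fin n) (h : i ≠ j) : TRel ⁅fx k n i + fx k n j, ft k n i j h⁆
  | yyt (i j : Fin n) (h : i ≠ j) : TRel ⁅fy k n i + fy k n j, ft k n i j h⁆
  | tsymm (i j : Fin n) (h : i ≠ j) : TRel (ft k n i j h - ft k n j i h.symm)

/-- The Lie ideal of relations of `𝔱_{1,n}`. -/
abbrev tIdeal : LieIdeal k (FT k n) :=
  LieSubmodule.lieSpan k (FT k n) {a | TRel k n a}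

/-- The Lie algebra `𝔱_{1,n}`. -/
abbrev T1 : Type := FT k n ⧸ tIdeal k n

/-- The generator `x i` of `𝔱_{1,n}`. -/
def tx (i : Fin n) : T1 k n := LieSubmodule.Quotient.mk (N := tIdeal k n) (fx k n i)

/-- The generator `y i` of `𝔱_{1,n}`. -/
def ty (i : Fin n) : T1 k n := LieSubmodule.Quotient.mk (N := tIdeal k n) (fy k n i)

/-- The generator `t i j` (for `i ≠ j`) of `𝔱_{1,n}`. -/
def tt (i j : Fin n) (h : i ≠ j) : T1 k n :=
  LieSubmodule.Quotient.mk (N := tIdeal k n) (ft k n i j h)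

/-- The adjoint operator `ad x : 𝔱_{1,n} → 𝔱_{1,n}`. -/
def adT (v : T1 k n) : Module.End k (T1 k n) := LieAlgebra.ad k (T1 k n) v

/-- Generators of `𝔊`: `X i`, `Y i` for `i ∈ [n]`, and `T i j α` for `i < j`, `α ≥ 0`. -/
inductive GGen (n : ℕ) : Type
  | X : Fin n → GGen n
  | Y : Fin n → GGen n
  | T : (i j : Fin n) → i < j → ℕ → GGen n

/-- The free Lie algebra on the generators of `𝔊`. -/
abbrev FG : Type := FreeLieAlgebra k (GGen n)

/-- The generator `X i` in the free Lie algebra. -/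
def gX (i : Fin n) : FG k n := FreeLieAlgebra.of k (GGen.X i)

/-- The generator `Y i` in the free Lie algebra. -/
def gY (i : Fin n) : FG k n := FreeLieAlgebra.of k (GGen.Y i)

/-- The generator `T i j α` (for `i < j`) in the free Lie algebra. -/
def gT (i j : Fin n) (h : i < j) (α : ℕ) : FG k n :=
  FreeLieAlgebra.of k (GGen.T i j h α)

/-- The defining relations of `𝔊`.  Sums `Σ_{γ+δ=α+β}` are written as sums over
`γ ∈ {0,…,α+β}` with `δ = α+β−γ`; sums `Σ_{γ+δ=α−1}` as sums over `γ ∈ {0,…,α−1}`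
with `δ = α−1−γ` (empty for `α = 0`); `C(a,b)` is `Nat.choose a b` (zero if `b > a`). -/
inductive GRel : FG k n → Prop
  | XX (i j : Fin n) : GRel ⁅gX k n i, gX k n j⁆
  | YY (i j : Fin n) : GRel ⁅gY k n i, gY k n j⁆
  | XYdiag (i : Fin n) :
      GRel (⁅gX k n i, gY k n i⁆
        - (∑ j : Fin n, if h : i < j then gT k n i j h 0 else 0)
        - (∑ j : Fin n, if h : j < i then gT k n j i h 0 else 0))
  | XYlt (i j : Fin n) (h : i < j) : GRel (⁅gX k n i, gY k n j⁆ + gT k n i j h 0)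
  | XYgt (i j : Fin n) (h : j < i) : GRel (⁅gX k n i, gY k n j⁆ + gT k n j i h 0)
  | XT (i j l : Fin n) (h : i < j) (h1 : l ≠ i) (h2 : l ≠ j) (α : ℕ) :
      GRel ⁅gX k n l, gT k n i j h α⁆
  | XTi (i j : Fin n) (h : i < j) (α : ℕ) :
      GRel (⁅gX k n i, gT k n i j h α⁆ - gT k n i j h (α + 1))
  | XTj (i j : Fin n) (h : i < j) (α : ℕ) :
      GRel (⁅gX k n j, gT k n i j h α⁆ + gT k n i j h (α + 1))
  | TT (i j l m : Fin n) (hij : i < j) (hlm : l < m) (hil : i < l)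
      (d1 : j ≠ l) (d2 : j ≠ m) (α β : ℕ) :
      GRel ⁅gT k n i j hij α, gT k n l m hlm β⁆
  | TTadj (i j l : Fin n) (hij : i < j) (hjl : j < l) (α β : ℕ) :
      GRel (⁅gT k n i j hij α, gT k n j l hjl β⁆
        + ∑ γ ∈ Finset.range (α + β + 1), (Nat.choose α γ : k) •
            ⁅gT k n i j hij γ, gT k n i l (hij.trans hjl) (α + β - γ)⁆)
  | TTadj' (i j l : Fin n) (hij : i < j) (hjl : j < l) (α β : ℕ) :
      GRel (⁅gT k n i l (hij.trans hjl) α, gT k n j l hjl β⁆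
        + ∑ γ ∈ Finset.range (α + β + 1),
            ((-1 : k) ^ (β + 1) * (Nat.choose α (α + β - γ) : k)) •
            ⁅gT k n i j hij γ, gT k n i l (hij.trans hjl) (α + β - γ)⁆)
  | YTlt (i j l : Fin n) (hij : i < j) (hli : l < i) (α : ℕ) :
      GRel (⁅gY k n l, gT k n i j hij α⁆
        + ∑ γ ∈ Finset.range α, ((-1 : k) ^ γ) •
            ⁅gT k n l i hli γ, gT k n l j (hli.trans hij) (α - 1 - γ)⁆)
  | YTmid (i j l : Fin n) (hil : i < l) (hlj : l < j) (α : ℕ) :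
      GRel (⁅gY k n l, gT k n i j (hil.trans hlj) α⁆
        - ∑ γ ∈ Finset.range α, (Nat.choose α (α - 1 - γ) : k) •
            ⁅gT k n i l hil γ, gT k n i j (hil.trans hlj) (α - 1 - γ)⁆)
  | YTgt (i j l : Fin n) (hij : i < j) (hjl : j < l) (α : ℕ) :
      GRel (⁅gY k n l, gT k n i j hij α⁆
        + ∑ γ ∈ Finset.range α, (Nat.choose α γ : k) •
            ⁅gT k n i j hij γ, gT k n i l (hij.trans hjl) (α - 1 - γ)⁆)
  | YYT (i j : Fin n) (hij : i < j) (α : ℕ) :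
      GRel (⁅gY k n i + gY k n j, gT k n i j hij α⁆
        + (∑ l : Fin n, if h : i < l ∧ l < j then
            ∑ γ ∈ Finset.range α, (Nat.choose α (α - 1 - γ) : k) •
              ⁅gT k n i l h.1 γ, gT k n i j hij (α - 1 - γ)⁆ else 0)
        - (∑ l : Fin n, if h : j < l then
            ∑ γ ∈ Finset.range α, (Nat.choose α γ : k) •
              ⁅gT k n i j hij γ, gT k n i l (hij.trans h) (α - 1 - γ)⁆ else 0)
        + (∑ l : Fin n, if h : l < i then
            ∑ γ ∈ Finset.range α, ((-1 : k) ^ (γ + 1)) •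
              ⁅gT k n l i h γ, gT k n l j (h.trans hij) (α - 1 - γ)⁆ else 0))

/-- The Lie ideal of relations of `𝔊`. -/
abbrev gIdeal : LieIdeal k (FG k n) :=
  LieSubmodule.lieSpan k (FG k n) {a | GRel k n a}

/-- The Lie algebra `𝔊`. -/
abbrev GLie : Type := FG k n ⧸ gIdeal k n

/-- The generator `X i` of `𝔊`. -/
def GXe (i : Fin n) : GLie k n := LieSubmodule.Quotient.mk (N := gIdeal k n) (gX k n i)

/-- The generator `Y i` of `𝔊`. -/
def GYe (i : Fin n) : GLie k n := LieSubmodule.Quotient.mk (N := gIdeal k n) (gY k n i)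

/-- The generator `T i j α` (for `i < j`) of `𝔊`. -/
def GTe (i j : Fin n) (h : i < j) (α : ℕ) : GLie k n :=
  LieSubmodule.Quotient.mk (N := gIdeal k n) (gT k n i j h α)

/-
`𝔱_{1,n}` is presented by generators and relations, so a morphism out of it is the
same as an assignment on generators satisfying the relations, and it is unique because the
generators generate.  Each relation of `𝔱_{1,n}` is sent to a defining relation of `𝔊` taken at
`α = 0` (where the sums over `γ + δ = α - 1` are empty); `[x_i + x_j, t_ij] ↦ 0` is the
cancellation of `[X_i, T_ij⁰] = T_ij¹` against `[X_j, T_ij⁰] = -T_ij¹`.  Since `t_ij = t_ji`,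
the relations indexed by `i > j` reduce to those with `i < j`.
-/

namespace LieIdeal

variable {R L L' : Type*} [CommRing R] [LieRing L] [LieAlgebra R L] [LieRing L'] [LieAlgebra R L']
  (I : LieIdeal R L)

def mkQ : L →ₗ⁅R⁆ L ⧸ I :=
  { (I : Submodule R L).mkQ with map_lie' := rfl }

def liftQ (f : L →ₗ⁅R⁆ L') (h : I ≤ f.ker) : L ⧸ I →ₗ⁅R⁆ L' :=
  { (I : Submodule R L).liftQ (f : L →ₗ[R] L') fun _ hx => f.mem_ker.1 (h hx) with
    map_lie' := by rintro ⟨x⟩ ⟨y⟩; exact f.map_lie x y }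

theorem liftQ_mk (f : L →ₗ⁅R⁆ L') (h : I ≤ f.ker) (x : L) :
    I.liftQ f h (LieSubmodule.Quotient.mk x) = f x :=
  rfl

theorem quotient_hom_ext {φ ψ : L ⧸ I →ₗ⁅R⁆ L'} (h : φ.comp I.mkQ = ψ.comp I.mkQ) : φ = ψ :=
  LieHom.ext fun z => by
    obtain ⟨x, rfl⟩ := Quotient.mk''_surjective z
    exact LieHom.congr_fun h x

end LieIdeal

namespace FreeLieAlgebra

variable {R X L : Type*} [CommRing R] [LieRing L] [LieAlgebra R L]

theorem existsUnique_lieHom_quotient_lieSpan (S : Set (FreeLieAlgebra R X)) (f : X → L)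
    (hS : ∀ a ∈ S, lift R f a = 0) :
    ∃! φ : FreeLieAlgebra R X ⧸ LieSubmodule.lieSpan R (FreeLieAlgebra R X) S →ₗ⁅R⁆ L,
      ∀ x, φ (LieSubmodule.Quotient.mk (of R x)) = f x := by
  have hker : LieSubmodule.lieSpan R (FreeLieAlgebra R X) S ≤ (lift R f).ker :=
    LieSubmodule.lieSpan_le.2 fun a ha => (lift R f).mem_ker.2 (hS a ha)
  refine ⟨LieIdeal.liftQ _ (lift R f) hker, fun x => (LieIdeal.liftQ_mk _ _ hker _).trans (lift_of_apply f x),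
    fun ψ hψ => ?_⟩
  refine LieIdeal.quotient_hom_ext _ (hom_ext fun x => ?_)
  exact (hψ x).trans (lift_of_apply f x).symm

end FreeLieAlgebra

theorem Ne.induction_on_lt {α : Type*} [LinearOrder α] {P : (a b : α) → a ≠ b → Prop}
    (lt : ∀ a b (h : a < b), P a b h.ne) (symm : ∀ a b (h : a ≠ b), P a b h → P b a h.symm)
    {a b : α} (h : a ≠ b) : P a b h :=
  h.lt_or_gt.elim (lt a b) fun hba => symm b a hba.ne (lt b a hba)

section

omit [CharZero k]

def GTeSymm (i j : Fin n) (h : i ≠ j) : GLie k n :=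
  if hij : i < j then -GTe k n i j hij 0 else -GTe k n j i (h.lt_or_gt.resolve_left hij) 0

def tGenImage : TGen n → GLie k n
  | .x i => GXe k n i
  | .y i => GYe k n i
  | .t i j h => GTeSymm k n i j h

variable {k n}

theorem GRel.mkQ_eq_zero {a : FG k n} (h : GRel k n a) : (gIdeal k n).mkQ a = 0 :=
  LieSubmodule.Quotient.mk_eq_zero'.2 (LieSubmodule.subset_lieSpan h)

@[simp] theorem mkQ_gX (i : Fin n) : (gIdeal k n).mkQ (gX k n i) = GXe k n i := rfl

@[simp] theorem mkQ_gY (i : Fin n) : (gIdeal k n).mkQ (gY k n i) = GYe k n i := rfl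

@[simp] theorem mkQ_gT (i j : Fin n) (h : i < j) (α : ℕ) :
    (gIdeal k n).mkQ (gT k n i j h α) = GTe k n i j h α := rfl

theorem lie_GXe_GXe (i j : Fin n) : ⁅GXe k n i, GXe k n j⁆ = 0 := by
  simpa only [LieHom.map_lie, mkQ_gX] using (GRel.XX i j).mkQ_eq_zero

theorem lie_GYe_GYe (i j : Fin n) : ⁅GYe k n i, GYe k n j⁆ = 0 := by
  simpa only [LieHom.map_lie, mkQ_gY] using (GRel.YY i j).mkQ_eq_zero

theorem lie_GXe_GYe_of_lt {i j : Fin n} (h : i < j) : ⁅GXe k n i, GYe k n j⁆ = -GTe k n i j h 0 :=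
  eq_neg_of_add_eq_zero_left <| by
    simpa only [map_add, LieHom.map_lie, mkQ_gX, mkQ_gY, mkQ_gT] using (GRel.XYlt i j h).mkQ_eq_zero

theorem lie_GXe_GYe_of_gt {i j : Fin n} (h : j < i) : ⁅GXe k n i, GYe k n j⁆ = -GTe k n j i h 0 :=
  eq_neg_of_add_eq_zero_left <| by
    simpa only [map_add, LieHom.map_lie, mkQ_gX, mkQ_gY, mkQ_gT] using (GRel.XYgt i j h).mkQ_eq_zero

theorem lie_GXe_GYe_self (i : Fin n) :
    ⁅GXe k n i, GYe k n i⁆ = (∑ j : Fin n, if h : i < j then GTe k n i j h 0 else 0)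
      + ∑ j : Fin n, if h : j < i then GTe k n j i h 0 else 0 := by
  have := (GRel.XYdiag (k := k) i).mkQ_eq_zero
  simp only [map_sub, map_sum, LieHom.map_lie, apply_dite (gIdeal k n).mkQ, map_zero, mkQ_gX,
    mkQ_gY, mkQ_gT] at this
  rwa [sub_sub, sub_eq_zero] at this

theorem lie_GXe_GTe_of_ne {i j l : Fin n} (h : i < j) (hi : l ≠ i) (hj : l ≠ j) (α : ℕ) :
    ⁅GXe k n l, GTe k n i j h α⁆ = 0 := by
  simpa only [LieHom.map_lie, mkQ_gX, mkQ_gT] using (GRel.XT i j l h hi hj α).mkQ_eq_zero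

theorem lie_GXe_GTe_left {i j : Fin n} (h : i < j) (α : ℕ) :
    ⁅GXe k n i, GTe k n i j h α⁆ = GTe k n i j h (α + 1) :=
  sub_eq_zero.1 <| by
    simpa only [map_sub, LieHom.map_lie, mkQ_gX, mkQ_gT] using (GRel.XTi i j h α).mkQ_eq_zero

theorem lie_GXe_GTe_right {i j : Fin n} (h : i < j) (α : ℕ) :
    ⁅GXe k n j, GTe k n i j h α⁆ = -GTe k n i j h (α + 1) :=
  eq_neg_of_add_eq_zero_left <| by
    simpa only [map_add, LieHom.map_lie, mkQ_gX, mkQ_gT] using (GRel.XTj i j h α).mkQ_eq_zero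

theorem lie_GYe_GTe_zero_of_ne {i j l : Fin n} (h : i < j) (hi : l ≠ i) (hj : l ≠ j) :
    ⁅GYe k n l, GTe k n i j h 0⁆ = 0 := by
  rcases hi.lt_or_gt with hli | hil
  · simpa using (GRel.YTlt i j l h hli 0).mkQ_eq_zero
  rcases hj.lt_or_gt with hlj | hjl
  · simpa using (GRel.YTmid i j l hil hlj 0).mkQ_eq_zero
  · simpa using (GRel.YTgt i j l h hjl 0).mkQ_eq_zero

theorem lie_GYe_add_GYe_GTe_zero {i j : Fin n} (h : i < j) :
    ⁅GYe k n i + GYe k n j, GTe k n i j h 0⁆ = 0 := by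
  simpa using (GRel.YYT i j h 0).mkQ_eq_zero

theorem GTeSymm_of_lt {i j : Fin n} (h : i < j) : GTeSymm k n i j h.ne = -GTe k n i j h 0 :=
  dif_pos h

theorem GTeSymm_of_gt {i j : Fin n} (h : j < i) : GTeSymm k n i j h.ne' = -GTe k n j i h 0 :=
  dif_neg h.asymm

theorem GTeSymm_comm {i j : Fin n} (h : i ≠ j) : GTeSymm k n j i h.symm = GTeSymm k n i j h :=
  Ne.induction_on_lt (P := fun i j h => GTeSymm k n j i h.symm = GTeSymm k n i j h)
    (fun _ _ h => (GTeSymm_of_gt h).trans (GTeSymm_of_lt h).symm) (fun _ _ _ e => e.symm) h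

theorem lie_GXe_GYe_of_ne {i j : Fin n} (h : i ≠ j) : ⁅GXe k n i, GYe k n j⁆ = GTeSymm k n i j h :=
  h.lt_or_gt.elim (fun h => (lie_GXe_GYe_of_lt h).trans (GTeSymm_of_lt h).symm)
    (fun h => (lie_GXe_GYe_of_gt h).trans (GTeSymm_of_gt h).symm)

theorem lie_GXe_GYe_self_add_sum_GTeSymm (i : Fin n) :
    ⁅GXe k n i, GYe k n i⁆ + ∑ j : Fin n, (if h : i ≠ j then GTeSymm k n i j h else 0) = 0 := by
  have hterm : ∀ j : Fin n, (if h : i ≠ j then GTeSymm k n i j h else 0) =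
      -(if h : i < j then GTe k n i j h 0 else 0) - if h : j < i then GTe k n j i h 0 else 0 := by
    intro j
    rcases lt_trichotomy i j with h | rfl | h
    · simp [h, h.ne, h.asymm, GTeSymm_of_lt h]
    · simp
    · simp [h, h.ne', h.asymm, GTeSymm_of_gt h]
  rw [lie_GXe_GYe_self, Finset.sum_congr rfl fun j _ => hterm j, Finset.sum_sub_distrib,
    Finset.sum_neg_distrib]
  abel

theorem lie_GXe_GTeSymm_of_ne {i j l : Fin n} (h : i ≠ j) (hi : l ≠ i) (hj : l ≠ j) :
    ⁅GXe k n l, GTeSymm k n i j h⁆ = 0 := by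
  rcases h.lt_or_gt with h | h
  · rw [GTeSymm_of_lt h, lie_neg, lie_GXe_GTe_of_ne h hi hj, neg_zero]
  · rw [GTeSymm_of_gt h, lie_neg, lie_GXe_GTe_of_ne h hj hi, neg_zero]

theorem lie_GYe_GTeSymm_of_ne {i j l : Fin n} (h : i ≠ j) (hi : l ≠ i) (hj : l ≠ j) :
    ⁅GYe k n l, GTeSymm k n i j h⁆ = 0 := by
  rcases h.lt_or_gt with h | h
  · rw [GTeSymm_of_lt h, lie_neg, lie_GYe_GTe_zero_of_ne h hi hj, neg_zero]
  · rw [GTeSymm_of_gt h, lie_neg, lie_GYe_GTe_zero_of_ne h hj hi, neg_zero]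

theorem lie_GXe_add_GXe_GTeSymm {i j : Fin n} (h : i ≠ j) :
    ⁅GXe k n i + GXe k n j, GTeSymm k n i j h⁆ = 0 := by
  refine Ne.induction_on_lt (P := fun i j h => ⁅GXe k n i + GXe k n j, GTeSymm k n i j h⁆ = 0)
    (fun i j h => ?_) (fun i j h e => ?_) h
  · rw [GTeSymm_of_lt h, lie_neg, add_lie, lie_GXe_GTe_left, lie_GXe_GTe_right, add_neg_cancel,
      neg_zero]
  · rwa [add_comm, GTeSymm_comm]

theorem lie_GYe_add_GYe_GTeSymm {i j : Fin n} (h : i ≠ j) :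
    ⁅GYe k n i + GYe k n j, GTeSymm k n i j h⁆ = 0 := by
  refine Ne.induction_on_lt (P := fun i j h => ⁅GYe k n i + GYe k n j, GTeSymm k n i j h⁆ = 0)
    (fun i j h => ?_) (fun i j h e => ?_) h
  · rw [GTeSymm_of_lt h, lie_neg, lie_GYe_add_GYe_GTe_zero, neg_zero]
  · rwa [add_comm, GTeSymm_comm]

theorem lift_tGenImage_of_TRel {a : FT k n} (ha : TRel k n a) :
    FreeLieAlgebra.lift k (tGenImage k n) a = 0 := by
  have hx (i : Fin n) : FreeLieAlgebra.lift k (tGenImage k n) (fx k n i) = GXe k n i :=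
    FreeLieAlgebra.lift_of_apply _ _
  have hy (i : Fin n) : FreeLieAlgebra.lift k (tGenImage k n) (fy k n i) = GYe k n i :=
    FreeLieAlgebra.lift_of_apply _ _
  have ht (i j : Fin n) (h : i ≠ j) :
      FreeLieAlgebra.lift k (tGenImage k n) (ft k n i j h) = GTeSymm k n i j h :=
    FreeLieAlgebra.lift_of_apply _ _
  induction ha with
  | xx i j => rw [LieHom.map_lie, hx, hx, lie_GXe_GXe]
  | yy i j => rw [LieHom.map_lie, hy, hy, lie_GYe_GYe]
  | xy i j h => rw [map_sub, LieHom.map_lie, hx, hy, ht, lie_GXe_GYe_of_ne h, sub_self]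
  | xyDiag i =>
    simp only [map_add, map_sum, LieHom.map_lie, hx, hy, apply_dite (FreeLieAlgebra.lift k _), ht,
      map_zero]
    exact lie_GXe_GYe_self_add_sum_GTeSymm i
  | xt i j l h hi hj => rw [LieHom.map_lie, hx, ht, lie_GXe_GTeSymm_of_ne h hi hj]
  | yt i j l h hi hj => rw [LieHom.map_lie, hy, ht, lie_GYe_GTeSymm_of_ne h hi hj]
  | xxt i j h => rw [LieHom.map_lie, map_add, hx, hx, ht, lie_GXe_add_GXe_GTeSymm]
  | yyt i j h => rw [LieHom.map_lie, map_add, hy, hy, ht, lie_GYe_add_GYe_GTeSymm]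
  | tsymm i j h => rw [map_sub, ht, ht, GTeSymm_comm h.symm, sub_self]

end

theorem statement11 :
    ∃! φ : T1 k n →ₗ⁅k⁆ GLie k n,
      (∀ i : Fin n, φ (tx k n i) = GXe k n i) ∧
      (∀ i : Fin n, φ (ty k n i) = GYe k n i) ∧
      (∀ (i j : Fin n) (h : i < j), φ (tt k n i j h.ne) = -GTe k n i j h 0) ∧
      (∀ (i j : Fin n) (h : j < i), φ (tt k n i j h.ne') = -GTe k n j i h 0) := by
  obtain ⟨φ, hφ, hunique⟩ := FreeLieAlgebra.existsUnique_lieHom_quotient_lieSpan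
    {a | TRel k n a} (tGenImage k n) fun _ => lift_tGenImage_of_TRel
  refine ⟨φ, ⟨fun i => hφ (.x i), fun i => hφ (.y i), fun i j h => ?_, fun i j h => ?_⟩, ?_⟩
  · exact (hφ (.t i j h.ne)).trans (GTeSymm_of_lt h)
  · exact (hφ (.t i j h.ne')).trans (GTeSymm_of_gt h)
  rintro ψ ⟨hx, hy, hlt, hgt⟩
  exact hunique ψ fun
    | .x i => hx i
    | .y i => hy i
    | .t i j h => h.lt_or_gt.elim (fun h => (hlt i j h).trans (GTeSymm_of_lt h).symm)
        (fun h => (hgt i j h).trans (GTeSymm_of_gt h).symm)
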